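/- arXiv:1704.08747 — 7 statements merged into one kernel-verified Lean document; each statement's English description precedes it below -/
import Mathlib

section
/- In a three-circle configuration, there exist a point I and a real number r > 0 such that X, Y, Z all lie on the circle centered at I with radius r, and this circle is orthogonal to each of the three given circles, i.e., (dist I A)² = a² + r², (dist I B)² = b² + r², and (dist I C)² = c² + r² (the radical circle of the three circles passes through the three points of tangency). -/
/-!
The radical circle is the incircle of the triangle of centres. Its centre `I`, the incentre, has
barycentric weights proportional to the opposite sides `b + c`, `a + c`, `a + b`, and the Lagrange
formula for distances to a barycentre shows that `I` has the same power `abc / (a + b + c)` with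
respect to all three circles. Each tangency point lies strictly between two centres, so Stewart's
theorem computes its squared distance from `I` as that same power.
-/

open EuclideanGeometry

theorem sbtw_of_dist_eq_add {V P : Type*} [NormedAddCommGroup V] [InnerProductSpace ℝ V]
    [MetricSpace P] [NormedAddTorsor V P] {A B Z : P} {a b : ℝ} (ha : 0 < a) (hb : 0 < b)
    (hAB : dist A B = a + b) (hZA : dist A Z = a) (hZB : dist B Z = b) : Sbtw ℝ A Z B := by
  refine ⟨dist_add_dist_eq_iff.mp ?_, ?_, ?_⟩
  · rw [hZA, dist_comm, hZB, hAB]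
  · rintro rfl
    simp only [dist_self] at hZA
    linarith
  · rintro rfl
    simp only [dist_self] at hZB
    linarith

theorem dist_tangencyPoint_sq_eq {V P : Type*} [NormedAddCommGroup V] [InnerProductSpace ℝ V]
    [MetricSpace P] [NormedAddTorsor V P] {A B Z I : P} {a b q : ℝ} (ha : 0 < a) (hb : 0 < b)
    (hAB : dist A B = a + b) (hZA : dist A Z = a) (hZB : dist B Z = b)
    (hIA : dist I A ^ 2 = a ^ 2 + q) (hIB : dist I B ^ 2 = b ^ 2 + q) : dist I Z ^ 2 = q := by
  have stewart := dist_sq_mul_dist_add_dist_sq_mul_dist I A B Z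
    (sbtw_of_dist_eq_add ha hb hAB hZA hZB).angle₁₂₃_eq_pi
  rw [hIA, hIB, hAB, hZA, hZB] at stewart
  have hab : 0 < a + b := by positivity
  nlinarith

theorem dist_affineCombination_point_sq {V P ι : Type*} [NormedAddCommGroup V]
    [InnerProductSpace ℝ V] [MetricSpace P] [NormedAddTorsor V P] [Fintype ι] [DecidableEq ι]
    (p : ι → P) {w : ι → ℝ} (hw : ∑ i, w i = 1) (j : ι) :
    dist (Finset.univ.affineCombination ℝ p w) (p j) ^ 2 =
      (-∑ i₁, ∑ i₂, (w - Pi.single j 1 : ι → ℝ) i₁ * (w - Pi.single j 1 : ι → ℝ) i₂ *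
        dist (p i₁) (p i₂) ^ 2) / 2 := by
  have hj : Finset.univ.affineCombination ℝ p (Pi.single j 1) = p j :=
    Finset.univ.affineCombination_of_eq_one_of_eq_zero _ _ (Finset.mem_univ j) (by simp)
      (fun i _ hi => by simp [hi])
  simpa only [← sq, hj] using dist_affineCombination p hw (w₂ := Pi.single j 1) (by simp)

theorem exists_dist_sq_eq_sq_add_of_dist_eq_add {V P : Type*} [NormedAddCommGroup V]
    [InnerProductSpace ℝ V] [MetricSpace P] [NormedAddTorsor V P] (A B C : P) {a b c : ℝ}
    (ha : 0 < a) (hb : 0 < b) (hc : 0 < c)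
    (hAB : dist A B = a + b) (hBC : dist B C = b + c) (hAC : dist A C = a + c) :
    ∃ I : P, dist I A ^ 2 = a ^ 2 + a * b * c / (a + b + c) ∧
      dist I B ^ 2 = b ^ 2 + a * b * c / (a + b + c) ∧
      dist I C ^ 2 = c ^ 2 + a * b * c / (a + b + c) := by
  have hs : a + b + c ≠ 0 := by positivity
  set w : Fin 3 → ℝ := fun i => ![b + c, a + c, a + b] i / (2 * (a + b + c))
  have hw : ∑ i, w i = 1 := by
    simp only [w, Fin.sum_univ_three, Matrix.cons_val]
    field_simp
    ring
  have power : ∀ j, dist (Finset.univ.affineCombination ℝ ![A, B, C] w) (![A, B, C] j) ^ 2 =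
      ![a, b, c] j ^ 2 + a * b * c / (a + b + c) := by
    intro j
    rw [dist_affineCombination_point_sq _ hw]
    fin_cases j <;>
    · simp only [Fin.zero_eta, Fin.mk_one, Fin.reduceFinMk, Fin.isValue, Fin.reduceEq, Pi.sub_apply,
        Fin.sum_univ_three, Matrix.cons_val_zero, Matrix.cons_val_one, Matrix.cons_val, ne_eq,
        one_ne_zero, zero_ne_one, not_false_eq_true, Pi.single_eq_same, Pi.single_eq_of_ne,
        dist_self, dist_comm B A, dist_comm C A, dist_comm C B, hAB, hBC, hAC, w]
      field_simp
      ring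
  exact ⟨_, power 0, power 1, power 2⟩

/-- The radical circle of three mutually externally tangent circles passes
through the three points of tangency and is orthogonal to each circle. -/
theorem radical_circle_through_tangency_points
    (A B C X Y Z : EuclideanSpace ℝ (Fin 2)) (a b c : ℝ)
    (ha : 0 < a) (hb : 0 < b) (hc : 0 < c)
    (hAB : dist A B = a + b) (hBC : dist B C = b + c) (hAC : dist A C = a + c)
    (hZA : dist A Z = a) (hZB : dist B Z = b)
    (hXB : dist B X = b) (hXC : dist C X = c)
    (hYA : dist A Y = a) (hYC : dist C Y = c) :
    ∃ (I : EuclideanSpace ℝ (Fin 2)) (r : ℝ), 0 < r ∧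
      dist I X = r ∧ dist I Y = r ∧ dist I Z = r ∧
      (dist I A) ^ 2 = a ^ 2 + r ^ 2 ∧
      (dist I B) ^ 2 = b ^ 2 + r ^ 2 ∧
      (dist I C) ^ 2 = c ^ 2 + r ^ 2 := by
  obtain ⟨I, hIA, hIB, hIC⟩ := exists_dist_sq_eq_sq_add_of_dist_eq_add A B C ha hb hc hAB hBC hAC
  have hq : 0 ≤ a * b * c / (a + b + c) := by positivity
  rw [← Real.sq_sqrt hq] at hIA hIB hIC
  set r := √(a * b * c / (a + b + c))
  have hr : 0 < r := Real.sqrt_pos.2 (by positivity)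
  have on_circle {T : EuclideanSpace ℝ (Fin 2)} (h : dist I T ^ 2 = r ^ 2) : dist I T = r :=
    (pow_left_inj₀ dist_nonneg hr.le two_ne_zero).1 h
  exact ⟨I, r, hr,
    on_circle (dist_tangencyPoint_sq_eq hb hc hBC hXB hXC hIB hIC),
    on_circle (dist_tangencyPoint_sq_eq ha hc hAC hYA hYC hIA hIC),
    on_circle (dist_tangencyPoint_sq_eq ha hb hAB hZA hZB hIA hIB), hIA, hIB, hIC⟩
end

section
/- In a three-circle configuration, there exist a point I and a real number r > 0 such that X, Y, Z lie on the circle centered at I with radius r, and this circle is the incircle of triangle ABC touching the sides at these points: the vector I - Z is orthogonal to B - A, the vector I - X is orthogonal to C - B, and the vector I - Y is orthogonal to C - A. -/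
open scoped RealInnerProductSpace

/-!
The incenter `I` of the triangle `ABC`, whose sides are `b + c`, `c + a`, `a + b`, has the same
power `a * b * c / (a + b + c)` with respect to all three circles. Equal power with respect to two
tangent circles puts `I` on their common tangent line at the point of tangency, so `I - Z ⊥ B - A`,
and then Pythagoras in the right triangle `A Z I` shows `dist I Z ^ 2` is that power.
-/

section

variable {V : Type*} [NormedAddCommGroup V] [InnerProductSpace ℝ V]

theorem norm_smul_add_smul_sq (u v : V) (β γ : ℝ) :
    ‖β • u + γ • v‖ ^ 2 =
      β * (β + γ) * ‖u‖ ^ 2 + γ * (β + γ) * ‖v‖ ^ 2 - β * γ * ‖u - v‖ ^ 2 := by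
  rw [norm_add_sq_real, norm_sub_sq_real, norm_smul, norm_smul, real_inner_smul_left,
    real_inner_smul_right, mul_pow, mul_pow, Real.norm_eq_abs, Real.norm_eq_abs, sq_abs, sq_abs]
  ring

theorem two_mul_inner_sub_sub_eq (I Z A B : V) :
    2 * ⟪I - Z, B - A⟫ = (dist I A ^ 2 - dist A Z ^ 2) - (dist I B ^ 2 - dist B Z ^ 2) := by
  have hA : I - A = (I - Z) + (Z - A) := by abel
  have hB : I - B = (I - Z) + (Z - B) := by abel
  rw [dist_comm A Z, dist_comm B Z, dist_eq_norm, dist_eq_norm, dist_eq_norm, dist_eq_norm, hA, hB,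
    norm_add_sq_real, norm_add_sq_real, show B - A = (Z - A) - (Z - B) by abel, inner_sub_right]
  ring

theorem dist_sq_eq_of_wbtw_of_inner_eq_zero {I Z A B : V} (hZ : Wbtw ℝ A Z B)
    (h : ⟪I - Z, B - A⟫ = 0) : dist I Z ^ 2 = dist I A ^ 2 - dist A Z ^ 2 := by
  obtain ⟨t, -, rfl⟩ := hZ
  have hperp : ⟪I - AffineMap.lineMap A B t, AffineMap.lineMap A B t - A⟫ = 0 := by
    rw [← vsub_eq_sub (AffineMap.lineMap A B t), AffineMap.lineMap_vsub_left, vsub_eq_sub,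
      real_inner_smul_right, h, mul_zero]
  have := norm_add_sq_eq_norm_sq_add_norm_sq_real hperp
  rw [sub_add_sub_cancel] at this
  rw [dist_eq_norm, dist_eq_norm, dist_eq_norm', sq, sq, sq, this]
  ring

theorem inner_eq_zero_and_dist_eq_of_dist_sq_eq_add {I Z A B : V} {a b ρ : ℝ}
    (hZA : dist A Z = a) (hZB : dist B Z = b) (hAB : dist A B = a + b)
    (hA : dist I A ^ 2 = a ^ 2 + ρ) (hB : dist I B ^ 2 = b ^ 2 + ρ) :
    ⟪I - Z, B - A⟫ = 0 ∧ dist I Z = √ρ := by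
  have hperp : ⟪I - Z, B - A⟫ = 0 := by
    have := two_mul_inner_sub_sub_eq I Z A B
    rw [hA, hB, hZA, hZB] at this
    linarith
  have hZ : Wbtw ℝ A Z B := by rw [← dist_add_dist_eq_iff, hZA, dist_comm, hZB, hAB]
  refine ⟨hperp, ?_⟩
  rw [← Real.sqrt_sq dist_nonneg, dist_sq_eq_of_wbtw_of_inner_eq_zero hZ hperp, hA, hZA,
    add_sub_cancel_left]

/-- Barycentric formula for the incenter of the triangle with side lengths
`b + c`, `c + a`, `a + b`. -/
noncomputable def incenterOfTangentCircles (A B C : V) (a b c : ℝ) : V :=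
  (2 * (a + b + c))⁻¹ • ((b + c) • A + (c + a) • B + (a + b) • C)

theorem incenterOfTangentCircles_rotate (A B C : V) (a b c : ℝ) :
    incenterOfTangentCircles B C A b c a = incenterOfTangentCircles A B C a b c := by
  unfold incenterOfTangentCircles
  rw [show b + c + a = a + b + c by ring]
  congr 1
  abel

theorem dist_incenterOfTangentCircles_sq {A B C : V} {a b c : ℝ} (hp : a + b + c ≠ 0)
    (hAB : dist A B = a + b) (hBC : dist B C = b + c) (hAC : dist A C = a + c) :
    dist (incenterOfTangentCircles A B C a b c) A ^ 2 = a ^ 2 + a * b * c / (a + b + c) := by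
  have h : incenterOfTangentCircles A B C a b c - A =
      ((c + a) / (2 * (a + b + c))) • (B - A) + ((a + b) / (2 * (a + b + c))) • (C - A) := by
    unfold incenterOfTangentCircles
    match_scalars <;> field_simp
    ring
  rw [dist_eq_norm, h, norm_smul_add_smul_sq, sub_sub_sub_cancel_right, ← dist_eq_norm,
    ← dist_eq_norm, ← dist_eq_norm, dist_comm B, dist_comm C, hAB, hBC, hAC]
  field_simp
  ring

end

/-- The circle through the three tangency points of three mutually externally
tangent circles is the incircle of the triangle of centers: its radii to the
tangency points are orthogonal to the corresponding sides. -/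
theorem tangency_circle_is_incircle
    (A B C X Y Z : EuclideanSpace ℝ (Fin 2)) (a b c : ℝ)
    (ha : 0 < a) (hb : 0 < b) (hc : 0 < c)
    (hAB : dist A B = a + b) (hBC : dist B C = b + c) (hAC : dist A C = a + c)
    (hZA : dist A Z = a) (hZB : dist B Z = b)
    (hXB : dist B X = b) (hXC : dist C X = c)
    (hYA : dist A Y = a) (hYC : dist C Y = c) :
    ∃ (I : EuclideanSpace ℝ (Fin 2)) (r : ℝ), 0 < r ∧
      dist I X = r ∧ dist I Y = r ∧ dist I Z = r ∧
      ⟪I - Z, B - A⟫ = (0 : ℝ) ∧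
      ⟪I - X, C - B⟫ = (0 : ℝ) ∧
      ⟪I - Y, C - A⟫ = (0 : ℝ) := by
  set I := incenterOfTangentCircles A B C a b c
  set ρ := a * b * c / (a + b + c)
  have hIA : dist I A ^ 2 = a ^ 2 + ρ :=
    dist_incenterOfTangentCircles_sq (by positivity) hAB hBC hAC
  have hIB : dist I B ^ 2 = b ^ 2 + ρ := by
    have := dist_incenterOfTangentCircles_sq (A := B) (B := C) (C := A) (a := b) (b := c) (c := a)
      (by positivity) hBC (by rw [dist_comm, hAC, add_comm]) (by rw [dist_comm, hAB, add_comm])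
    rw [incenterOfTangentCircles_rotate A B C a b c] at this
    linear_combination this
  have hIC : dist I C ^ 2 = c ^ 2 + ρ := by
    have := dist_incenterOfTangentCircles_sq (A := C) (B := A) (C := B) (a := c) (b := a) (c := b)
      (by positivity) (by rw [dist_comm, hAC, add_comm]) hAB (by rw [dist_comm, hBC, add_comm])
    rw [← incenterOfTangentCircles_rotate C A B c a b] at this
    linear_combination this
  obtain ⟨hZ, hIZ⟩ := inner_eq_zero_and_dist_eq_of_dist_sq_eq_add hZA hZB hAB hIA hIB
  obtain ⟨hX, hIX⟩ := inner_eq_zero_and_dist_eq_of_dist_sq_eq_add hXB hXC hBC hIB hIC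
  obtain ⟨hY, hIY⟩ := inner_eq_zero_and_dist_eq_of_dist_sq_eq_add hYA hYC hAC hIA hIC
  exact ⟨I, √ρ, by positivity, hIX, hIY, hIZ, hZ, hX, hY⟩
end

section
/- In a three-circle configuration, let B' be a point lying both on the line through X and Z and on the line through A and C. Then the inversion of the plane with center B' and radius dist B' Y sends X to Z. -/
/-!
The tangency points `X`, `Y`, `Z` lie on the incircle of `ABC`: its centre is the radical centre
of the three circles, so it is at the same distance from the three tangency points and touches
`AC` at `Y`. As `B'` lies on the tangent `AC`, its power with respect to the incircle is `B'Y²`;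
as it lies on the chord `XZ`, that power is also the signed product `⟪X - B', Z - B'⟫`. Hence `X`
and `Z` are exchanged by the inversion about `B'` of radius `B'Y`.
-/

open RealInnerProductSpace

namespace EuclideanGeometry

section

variable {V P : Type*} [NormedAddCommGroup V] [InnerProductSpace ℝ V] [MetricSpace P]
  [NormedAddTorsor V P]

theorem Sphere.inner_vsub_vsub_eq_power {s : Sphere P} {p x z : P} (hx : x ∈ s) (hz : z ∈ s)
    (hp : p ∈ line[ℝ, x, z]) : ⟪x -ᵥ p, z -ᵥ p⟫ = s.power p := by
  rw [← vsub_vadd p x, vadd_left_mem_affineSpan_pair] at hp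
  obtain ⟨t, ht⟩ := hp
  have hu : ‖x -ᵥ s.center‖ = s.radius := by rw [← dist_eq_norm_vsub V, mem_sphere.mp hx]
  have hd : ‖(z -ᵥ x) + (x -ᵥ s.center)‖ ^ 2 = s.radius ^ 2 := by
    rw [vsub_add_vsub_cancel, ← dist_eq_norm_vsub V, mem_sphere.mp hz]
  have hxp : x -ᵥ p = -(t • (z -ᵥ x)) := by rw [ht, neg_vsub_eq_vsub_rev]
  have hzp : z -ᵥ p = (1 - t) • (z -ᵥ x) := by
    rw [sub_smul, one_smul, ht, vsub_sub_vsub_cancel_right]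
  have hpc : p -ᵥ s.center = t • (z -ᵥ x) + (x -ᵥ s.center) := by
    rw [ht, vsub_add_vsub_cancel]
  rw [Sphere.power, dist_eq_norm_vsub V, hpc, hxp, hzp, ← hu]
  rw [norm_add_sq_real, ← hu] at hd
  rw [norm_add_sq_real, inner_neg_left, real_inner_smul_left, real_inner_smul_right,
    real_inner_smul_left, norm_smul, mul_pow, Real.norm_eq_abs, sq_abs, real_inner_self_eq_norm_sq]
  linear_combination (-t) * hd

theorem inversion_eq_of_inner_vsub_vsub_eq_sq {p x z : P} {R : ℝ} (hp : p ∈ line[ℝ, x, z])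
    (hx : x ≠ p) (h : ⟪x -ᵥ p, z -ᵥ p⟫ = R ^ 2) : inversion p R x = z := by
  have hz : z ∈ line[ℝ, p, x] :=
    (collinear_insert_of_mem_affineSpan_pair hp).mem_affineSpan_of_mem_of_ne (by simp) (by simp)
      (by simp) hx.symm
  rw [← vsub_vadd z p, vadd_left_mem_affineSpan_pair] at hz
  obtain ⟨k, hk⟩ := hz
  have hd : dist x p ≠ 0 := dist_ne_zero.mpr hx
  have hk' : k = (R / dist x p) ^ 2 := by
    rw [← hk, real_inner_smul_right, real_inner_self_eq_norm_sq, ← dist_eq_norm_vsub V] at h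
    rw [div_pow, eq_div_iff (pow_ne_zero 2 hd), ← h]
  rw [inversion, ← hk', hk, vsub_vadd]

theorem Sphere.power_sub_power_eq_two_mul_inner {s₁ s₂ : Sphere P} {p : P} (h₁ : p ∈ s₁)
    (h₂ : p ∈ s₂) (o : P) :
    s₁.power o - s₂.power o = 2 * ⟪o -ᵥ p, s₂.center -ᵥ s₁.center⟫ := by
  rw [Sphere.power, Sphere.power, ← mem_sphere.mp h₁, ← mem_sphere.mp h₂,
    dist_eq_norm_vsub V, dist_eq_norm_vsub V, dist_eq_norm_vsub V, dist_eq_norm_vsub V,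
    ← vsub_add_vsub_cancel o p s₁.center, ← vsub_add_vsub_cancel o p s₂.center,
    ← vsub_sub_vsub_cancel_left s₂.center s₁.center p, norm_add_sq_real, norm_add_sq_real,
    inner_sub_right]
  ring

theorem isTangentAt_of_inner_vsub_eq_zero {A C p o : P} (hp : p ∈ line[ℝ, A, C])
    (h : ⟪o -ᵥ p, C -ᵥ A⟫ = 0) : (⟨o, dist p o⟩ : Sphere P).IsTangentAt p line[ℝ, A, C] := by
  refine ⟨mem_sphere.mpr rfl, hp, fun q hq ↦ ?_⟩
  obtain ⟨r, hr⟩ := mem_vectorSpan_pair_rev.mp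
    (by rw [← direction_affineSpan]; exact AffineSubspace.vsub_mem_direction hq hp :
      q -ᵥ p ∈ vectorSpan ℝ {A, C})
  rw [Sphere.mem_orthRadius_iff_inner_left]
  change ⟪q -ᵥ p, p -ᵥ o⟫ = 0
  rw [← hr, real_inner_smul_left, ← neg_vsub_eq_vsub_rev o p, inner_neg_right, real_inner_comm, h]
  simp

theorem exists_inner_vsub_eq_zero_and_inner_vsub_eq_zero {v w : V}
    (h : ⟪v, w⟫ ^ 2 ≠ ‖v‖ ^ 2 * ‖w‖ ^ 2) (p q : P) :
    ∃ o : P, ⟪o -ᵥ p, v⟫ = 0 ∧ ⟪o -ᵥ q, w⟫ = 0 := by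
  have hG : ‖v‖ ^ 2 * ‖w‖ ^ 2 - ⟪v, w⟫ ^ 2 ≠ 0 := sub_ne_zero.mpr h.symm
  set β := ⟪q -ᵥ p, w⟫
  -- `‖v‖² w - ⟪v, w⟫ v` is orthogonal to `v`
  refine ⟨(β / (‖v‖ ^ 2 * ‖w‖ ^ 2 - ⟪v, w⟫ ^ 2)) • (‖v‖ ^ 2 • w - ⟪v, w⟫ • v) +ᵥ p, ?_, ?_⟩
  · rw [vadd_vsub, real_inner_smul_left, inner_sub_left, real_inner_smul_left,
      real_inner_smul_left, real_inner_comm w, real_inner_self_eq_norm_sq]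
    ring
  · rw [vadd_vsub_assoc, ← neg_vsub_eq_vsub_rev q p, inner_add_left, inner_neg_left,
      real_inner_smul_left, inner_sub_left, real_inner_smul_left, real_inner_smul_left,
      real_inner_self_eq_norm_sq]
    field_simp
    ring

theorem inner_vsub_vsub_of_dist_eq_add {A B C : P} {a b c : ℝ} (hAB : dist A B = a + b)
    (hAC : dist A C = a + c) (hBC : dist B C = b + c) :
    ⟪B -ᵥ A, C -ᵥ A⟫ = a ^ 2 + a * b + a * c - b * c := by
  rw [real_inner_eq_norm_mul_self_add_norm_mul_self_sub_norm_sub_mul_self_div_two,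
    vsub_sub_vsub_cancel_right, ← dist_eq_norm_vsub V, ← dist_eq_norm_vsub V,
    ← dist_eq_norm_vsub V, dist_comm B, dist_comm C, hAB, hAC, hBC]
  ring

theorem vsub_eq_div_smul_vsub_of_dist_eq_add {A C Y : P} {a c : ℝ} (hac : a + c ≠ 0)
    (hAC : dist A C = a + c) (hYA : dist A Y = a) (hYC : dist C Y = c) :
    Y -ᵥ A = (a / (a + c)) • (C -ᵥ A) := by
  have hY : Y = AffineMap.lineMap A C (a / (a + c)) := by
    refine eq_lineMap_of_dist_eq_mul_of_dist_eq_mul ?_ ?_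
    · rw [hYA, hAC, div_mul_cancel₀ _ hac]
    · rw [dist_comm, hYC, hAC]
      field_simp
      ring
  rw [hY, AffineMap.lineMap_vsub_left]

theorem mem_affineSpan_pair_of_dist_eq_add {A B Z : P} {a b : ℝ} (hAB : dist A B = a + b)
    (hZA : dist A Z = a) (hZB : dist B Z = b) : Z ∈ line[ℝ, A, B] :=
  (dist_add_dist_eq_iff.mp (by rw [hZA, dist_comm, hZB, hAB])).mem_affineSpan

theorem exists_sphere_mem_mem_isTangentAt {A B C X Y Z : P} {a b c : ℝ} (ha : 0 < a)
    (hb : 0 < b) (hc : 0 < c) (hAB : dist A B = a + b) (hBC : dist B C = b + c)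
    (hAC : dist A C = a + c) (hZA : dist A Z = a) (hZB : dist B Z = b) (hXB : dist B X = b)
    (hXC : dist C X = c) (hYA : dist A Y = a) (hYC : dist C Y = c) :
    ∃ s : Sphere P, X ∈ s ∧ Z ∈ s ∧ s.IsTangentAt Y line[ℝ, A, C] := by
  have hgram : ⟪B -ᵥ A, C -ᵥ A⟫ ^ 2 ≠ ‖B -ᵥ A‖ ^ 2 * ‖C -ᵥ A‖ ^ 2 := by
    rw [inner_vsub_vsub_of_dist_eq_add hAB hAC hBC, ← dist_eq_norm_vsub', ← dist_eq_norm_vsub',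
      hAB, hAC]
    have : 0 < a * b * c * (a + b + c) := by positivity
    nlinarith
  obtain ⟨I, hIZ, hIY⟩ := exists_inner_vsub_eq_zero_and_inner_vsub_eq_zero hgram Z Y
  -- `I` has equal powers with respect to the three circles, so it lies on the third radical axis
  have hIX : ⟪I -ᵥ X, C -ᵥ B⟫ = 0 := by
    have hAB' := Sphere.power_sub_power_eq_two_mul_inner (s₁ := ⟨A, a⟩) (s₂ := ⟨B, b⟩)
      (by rw [mem_sphere, dist_comm, hZA]) (by rw [mem_sphere, dist_comm, hZB]) I
    have hAC' := Sphere.power_sub_power_eq_two_mul_inner (s₁ := ⟨A, a⟩) (s₂ := ⟨C, c⟩)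
      (by rw [mem_sphere, dist_comm, hYA]) (by rw [mem_sphere, dist_comm, hYC]) I
    have hBC' := Sphere.power_sub_power_eq_two_mul_inner (s₁ := ⟨B, b⟩) (s₂ := ⟨C, c⟩)
      (by rw [mem_sphere, dist_comm, hXB]) (by rw [mem_sphere, dist_comm, hXC]) I
    dsimp only at hAB' hAC' hBC'
    rw [hIZ] at hAB'
    rw [hIY] at hAC'
    linarith
  have hZ := isTangentAt_of_inner_vsub_eq_zero (mem_affineSpan_pair_of_dist_eq_add hAB hZA hZB) hIZ
  have hY := isTangentAt_of_inner_vsub_eq_zero (mem_affineSpan_pair_of_dist_eq_add hAC hYA hYC) hIY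
  have hX := isTangentAt_of_inner_vsub_eq_zero (mem_affineSpan_pair_of_dist_eq_add hBC hXB hXC) hIX
  have hZA' := hZ.dist_sq_eq_of_mem (left_mem_affineSpan_pair ℝ A B)
  have hZB' := hZ.dist_sq_eq_of_mem (right_mem_affineSpan_pair ℝ A B)
  have hYA' := hY.dist_sq_eq_of_mem (left_mem_affineSpan_pair ℝ A C)
  have hXB' := hX.dist_sq_eq_of_mem (left_mem_affineSpan_pair ℝ B C)
  simp only [hZA, hZB, hYA, hXB] at hZA' hZB' hYA' hXB'
  refine ⟨⟨I, dist Y I⟩, ?_, ?_, hY⟩ <;> rw [mem_sphere] <;>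
    exact (pow_left_inj₀ dist_nonneg dist_nonneg two_ne_zero).mp (by dsimp only; linarith)

end

theorem dist_sq_eq_of_dist_eq_add {V P : Type*} [NormedAddCommGroup V] [InnerProductSpace ℝ V]
    [MetricSpace P] [NormedAddTorsor V P] {A B C Y Z : P} {a b c : ℝ} (hab : a + b ≠ 0)
    (hac : a + c ≠ 0) (hAB : dist A B = a + b) (hAC : dist A C = a + c) (hBC : dist B C = b + c)
    (hZA : dist A Z = a) (hZB : dist B Z = b) (hYA : dist A Y = a) (hYC : dist C Y = c) :
    dist Z Y ^ 2 = 4 * a ^ 2 * b * c / ((a + b) * (a + c)) := by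
  rw [dist_eq_norm_vsub V, ← vsub_sub_vsub_cancel_right Z Y A,
    vsub_eq_div_smul_vsub_of_dist_eq_add hab hAB hZA hZB,
    vsub_eq_div_smul_vsub_of_dist_eq_add hac hAC hYA hYC, norm_sub_sq_real, norm_smul,
    norm_smul, real_inner_smul_left, real_inner_smul_right,
    inner_vsub_vsub_of_dist_eq_add hAB hAC hBC, ← dist_eq_norm_vsub', ← dist_eq_norm_vsub',
    hAB, hAC, mul_pow, mul_pow, Real.norm_eq_abs, Real.norm_eq_abs, sq_abs, sq_abs]
  field_simp
  ring

end EuclideanGeometry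

open EuclideanGeometry

/-- In a three-circle configuration, the inversion centered at
`B' = XZ ∩ AC` with radius `dist B' Y` sends `X` to `Z`. -/
theorem inversion_sends_X_to_Z
    (A B C X Y Z B' : EuclideanSpace ℝ (Fin 2)) (a b c : ℝ)
    (ha : 0 < a) (hb : 0 < b) (hc : 0 < c)
    (hAB : dist A B = a + b) (hBC : dist B C = b + c) (hAC : dist A C = a + c)
    (hZA : dist A Z = a) (hZB : dist B Z = b)
    (hXB : dist B X = b) (hXC : dist C X = c)
    (hYA : dist A Y = a) (hYC : dist C Y = c)
    (hB'XZ : B' ∈ line[ℝ, X, Z]) (hB'AC : B' ∈ line[ℝ, A, C]) :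
    EuclideanGeometry.inversion B' (dist B' Y) X = Z := by
  obtain ⟨s, hXs, hZs, hYs⟩ :=
    exists_sphere_mem_mem_isTangentAt ha hb hc hAB hBC hAC hZA hZB hXB hXC hYA hYC
  have hpow : ⟪X -ᵥ B', Z -ᵥ B'⟫ = dist B' Y ^ 2 := by
    rw [s.inner_vsub_vsub_eq_power hXs hZs hB'XZ, Sphere.power, hYs.dist_sq_eq_of_mem hB'AC]
    ring
  have hXY : X ≠ Y := by
    intro h
    have hXY := dist_sq_eq_of_dist_eq_add (A := C) (B := B) (C := A) (by positivity)
      (by positivity) (by rw [dist_comm, hBC, add_comm]) (by rw [dist_comm, hAC, add_comm])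
      (by rw [dist_comm, hAB, add_comm]) hXC hXB hYC hYA
    rw [h, dist_self, zero_pow two_ne_zero] at hXY
    exact (by positivity : 0 < 4 * c ^ 2 * b * a / ((c + b) * (c + a))).ne hXY
  have hXB' : X ≠ B' := by
    rintro rfl
    rw [vsub_self, inner_zero_left, eq_comm, sq_eq_zero_iff] at hpow
    exact hXY (dist_eq_zero.mp hpow)
  exact inversion_eq_of_inner_vsub_vsub_eq_sq hB'XZ hXB' hpow
end

section
/- In a three-circle configuration, let B' be a point lying both on the line through X and Z and on the line through A and C. Then the inversion with center B' and radius dist B' Y maps the circle centered at A with radius a onto the circle centered at C with radius c (the image of the sphere of center A and radius a under the inversion equals the sphere of center C and radius c). -/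
/-!
Each tangency point divides the segment of centres in the ratio of the radii, so Menelaus'
theorem in the triangle `ABC` puts the intersection `B'` of `XZ` and `AC` at
`A + a / (a - c) • (C - A)`: the external centre of similitude of `O_A` and `O_C`.
An inversion centred at a point `O` with `a • (C - O) = c • (A - O)` and power
`|OA| |OC| - a c` maps the circle `(A, a)` into the circle `(C, c)`; the condition is symmetric
under swapping the two circles, which gives the reverse inclusion. For the tangency point `Y`
on `AC` one computes `B'Y² = |B'A| |B'C| - a c`.
-/

open EuclideanGeometry Metric Set AffineMap

section Tangency

variable {V P : Type*} [NormedAddCommGroup V] [NormedSpace ℝ V] [StrictConvexSpace ℝ V]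
  [MetricSpace P] [NormedAddTorsor V P]

theorem eq_lineMap_of_dist_eq_add {x y z : P} {a b : ℝ} (hab : a + b ≠ 0)
    (hxz : dist x z = a + b) (hxy : dist x y = a) (hyz : dist y z = b) :
    y = lineMap x z (a / (a + b)) :=
  eq_lineMap_of_dist_eq_mul_of_dist_eq_mul (by rw [hxy, hxz, div_mul_cancel₀ _ hab])
    (by rw [hyz, hxz, one_sub_div hab, add_sub_cancel_left, div_mul_cancel₀ _ hab])

theorem not_collinear_of_dist_eq_add {A B C : P} {a b c : ℝ} (ha : 0 < a) (hb : 0 < b)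
    (hc : 0 < c) (hAB : dist A B = a + b) (hBC : dist B C = b + c) (hAC : dist A C = a + c) :
    ¬Collinear ℝ ({A, B, C} : Set P) := fun h ↦ by
  rcases h.wbtw_or_wbtw_or_wbtw with h | h | h <;>
    linarith [dist_add_dist_eq_iff.mpr h, dist_comm A B, dist_comm B C, dist_comm A C]

end Tangency

section Menelaus

variable {k V P : Type*} [Field k] [AddCommGroup V] [Module k V] [AddTorsor V P]

theorem linearIndependent_vsub_of_not_collinear {p₁ p₂ p₃ : P}
    (h : ¬Collinear k ({p₁, p₂, p₃} : Set P)) :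
    LinearIndependent k ![p₂ -ᵥ p₁, p₃ -ᵥ p₁] := by
  have := affineIndependent_iff_not_collinear_set.mpr h
  rw [affineIndependent_iff_linearIndependent_vsub k _ (0 : Fin 3),
    ← linearIndependent_equiv (finSuccAboveEquiv (0 : Fin 3))] at this
  convert this using 1
  · ext i
    fin_cases i <;> rfl
  · rfl

theorem smul_sub_eq_of_mem_line_of_mem_line {A B C X Z B' : V} {a b c : k}
    (hABC : ¬Collinear k ({A, B, C} : Set V)) (hab : a + b ≠ 0) (hbc : b + c ≠ 0)
    (hZ : Z = lineMap A B (a / (a + b))) (hX : X = lineMap B C (b / (b + c)))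
    (hXZ : B' ∈ line[k, X, Z]) (hAC : B' ∈ line[k, A, C]) :
    (a - c) • (B' - A) = a • (C - A) := by
  obtain ⟨r, rfl⟩ := mem_affineSpan_pair_iff_exists_lineMap_eq.mp hAC
  obtain ⟨v, hv⟩ := mem_affineSpan_pair_iff_exists_lineMap_eq.mp hXZ
  subst hZ hX
  simp only [lineMap_apply_module] at hv ⊢
  have hrel : ((1 - v) * (1 - b / (b + c)) + v * (a / (a + b))) • (B - A)
      + ((1 - v) * (b / (b + c)) - r) • (C - A) = 0 := by
    linear_combination (norm := module) hv
  obtain ⟨hB, hC⟩ := LinearIndependent.pair_iff.mp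
    (linearIndependent_vsub_of_not_collinear hABC) _ _ hrel
  field_simp at hB hC
  have hr : (b + c) * ((a - c) * r - a) = 0 := by linear_combination -(a - c) * hC - hB
  have hr' : (a - c) * r = a := sub_eq_zero.mp ((mul_eq_zero.mp hr).resolve_left hbc)
  linear_combination (norm := module) hr' • (C - A)

end Menelaus

section Inversion

variable {V P : Type*} [NormedAddCommGroup V] [InnerProductSpace ℝ V] [MetricSpace P]
  [NormedAddTorsor V P] {O A C : P} {R a c : ℝ}

theorem mapsTo_inversion_sphere (ha : 0 < a) (hc : 0 ≤ c)
    (hO : a • (C -ᵥ O) = c • (A -ᵥ O)) (hR : R ^ 2 = dist A O * dist C O - a * c) :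
    MapsTo (inversion O R) (sphere A a) (sphere C c) := by
  intro x hx
  rw [Metric.mem_sphere] at hx ⊢
  have hCO : a * dist C O = c * dist A O := by
    simpa [dist_eq_norm_vsub V, norm_smul, abs_of_pos ha, abs_of_nonneg hc] using
      congrArg norm hO
  rcases eq_or_ne x O with rfl | hxO
  · rw [inversion_self, dist_comm, ← mul_left_cancel_iff_of_pos ha, hCO, dist_comm, hx, mul_comm]
  set u := x -ᵥ O
  have hu : ‖u‖ = dist x O := (dist_eq_norm_vsub V x O).symm
  have huA : 2 * inner ℝ u (A -ᵥ O) = dist x O ^ 2 + dist A O ^ 2 - a ^ 2 := by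
    have := norm_sub_sq_real u (A -ᵥ O)
    rw [vsub_sub_vsub_cancel_right, ← dist_eq_norm_vsub, hx, hu, ← dist_eq_norm_vsub] at this
    linarith
  have huC : a * inner ℝ u (C -ᵥ O) = c * inner ℝ u (A -ᵥ O) := by
    rw [← real_inner_smul_right, hO, real_inner_smul_right]
  have haR : a * R ^ 2 = c * (dist A O ^ 2 - a ^ 2) := by
    linear_combination a * hR + dist A O * hCO
  have hx0 : dist x O ≠ 0 := dist_ne_zero.mpr hxO
  have hdist : dist (inversion O R x) C ^ 2 * dist x O ^ 2 =
      R ^ 4 - 2 * R ^ 2 * inner ℝ u (C -ᵥ O) + dist x O ^ 2 * dist C O ^ 2 := by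
    rw [dist_eq_norm_vsub V, ← vsub_sub_vsub_cancel_right _ _ O, inversion_vsub_center,
      norm_sub_sq_real, norm_smul, real_inner_smul_left, hu, ← dist_eq_norm_vsub V C O,
      Real.norm_eq_abs, mul_pow, sq_abs]
    field_simp
    ring
  have hsq : (a * dist x O) ^ 2 * dist (inversion O R x) C ^ 2 =
      (a * dist x O) ^ 2 * c ^ 2 := by
    linear_combination a ^ 2 * hdist + (a * R ^ 2 - c * dist x O ^ 2) * haR
      - 2 * a * R ^ 2 * huC - a * R ^ 2 * c * huA
      + dist x O ^ 2 * (a * dist C O + c * dist A O) * hCO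
  exact (pow_left_inj₀ dist_nonneg hc two_ne_zero).mp
    (mul_left_cancel₀ (by positivity) hsq)

theorem image_inversion_sphere (ha : 0 < a) (hc : 0 < c) (hR₀ : R ≠ 0)
    (hO : a • (C -ᵥ O) = c • (A -ᵥ O)) (hR : R ^ 2 = dist A O * dist C O - a * c) :
    inversion O R '' sphere A a = sphere C c := by
  refine (mapsTo_inversion_sphere ha hc.le hO hR).image_subset.antisymm fun y hy ↦
    ⟨inversion O R y, ?_, inversion_inversion O hR₀ y⟩
  exact mapsTo_inversion_sphere hc ha.le hO.symm (by rw [hR]; ring) hy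

theorem image_inversion_sphere_of_dist_eq_add (ha : 0 < a) (hc : 0 < c) (hac : a ≠ c)
    (hAC : dist A C = a + c) :
    inversion (lineMap A C (a / (a - c)))
        (dist (lineMap A C (a / (a - c))) (lineMap A C (a / (a + c)))) '' sphere A a =
      sphere C c := by
  have hac' : a - c ≠ 0 := sub_ne_zero.mpr hac
  have hs : a / (a - c) - a / (a + c) = 2 * a * c / ((a - c) * (a + c)) := by
    field_simp
    ring
  apply image_inversion_sphere ha hc
  · rw [dist_lineMap_lineMap, Real.dist_eq, hs, hAC]
    positivity
  · rw [right_vsub_lineMap, left_vsub_lineMap, ← neg_vsub_eq_vsub_rev C A, smul_smul,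
      smul_smul, smul_neg, ← neg_smul]
    congr 1
    field_simp
    ring
  · rw [dist_lineMap_lineMap, dist_left_lineMap, dist_right_lineMap, Real.dist_eq, hs, hAC,
      Real.norm_eq_abs, Real.norm_eq_abs, mul_mul_mul_comm, ← abs_mul,
      show a / (a - c) * (1 - a / (a - c)) = -(a * c / (a - c) ^ 2) by field_simp; ring,
      abs_neg, abs_of_pos (div_pos (mul_pos ha hc) (pow_two_pos_of_ne_zero hac')), mul_pow,
      sq_abs]
    field_simp
    ring

end Inversion

/-- In a three-circle configuration, the inversion centered at
`B' = XZ ∩ AC` with radius `dist B' Y` maps circle `O_A` onto circle `O_C`. -/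
theorem inversion_maps_OA_to_OC
    (A B C X Y Z B' : EuclideanSpace ℝ (Fin 2)) (a b c : ℝ)
    (ha : 0 < a) (hb : 0 < b) (hc : 0 < c)
    (hAB : dist A B = a + b) (hBC : dist B C = b + c) (hAC : dist A C = a + c)
    (hZA : dist A Z = a) (hZB : dist B Z = b)
    (hXB : dist B X = b) (hXC : dist C X = c)
    (hYA : dist A Y = a) (hYC : dist C Y = c)
    (hB'XZ : B' ∈ line[ℝ, X, Z]) (hB'AC : B' ∈ line[ℝ, A, C]) :
    EuclideanGeometry.inversion B' (dist B' Y) '' Metric.sphere A a =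
      Metric.sphere C c := by
  have hZ := eq_lineMap_of_dist_eq_add (by positivity) hAB hZA (by rwa [dist_comm])
  have hX := eq_lineMap_of_dist_eq_add (by positivity) hBC hXB (by rwa [dist_comm])
  have hY := eq_lineMap_of_dist_eq_add (by positivity) hAC hYA (by rwa [dist_comm])
  have hABC := not_collinear_of_dist_eq_add ha hb hc hAB hBC hAC
  have hB' := smul_sub_eq_of_mem_line_of_mem_line hABC (by positivity) (by positivity)
    hZ hX hB'XZ hB'AC
  have hac : a - c ≠ 0 := by
    intro h
    rw [h, zero_smul, eq_comm, smul_eq_zero, sub_eq_zero] at hB'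
    rcases hB' with rfl | rfl
    · exact ha.false
    · rw [dist_self] at hAC; linarith
  have hB'_eq : B' = lineMap A C (a / (a - c)) := by
    rw [lineMap_apply_module', div_eq_inv_mul, mul_smul, ← hB', inv_smul_smul₀ hac,
      sub_add_cancel]
  rw [hB'_eq, hY]
  exact image_inversion_sphere_of_dist_eq_add ha hc (sub_ne_zero.mp hac) hAC
end

section
/- In a three-circle configuration, let B' be a point lying both on the line through X and Z and on the line through A and C. Then the inversion with center B' and radius dist B' Y maps the circle centered at B with radius b onto itself (the image of the sphere of center B and radius b under the inversion equals that same sphere). -/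
/-!
The tangency points divide the sides of `ABC` in the ratios of the radii, so Menelaus' theorem
for the transversal `XZ` shows that `B'` divides `AC` externally in the ratio `a : c`: it is the
external centre of similitude of `O_A` and `O_C`. Stewart's theorem then gives
`B'B² = b² + B'Y²`, i.e. the circle of inversion is orthogonal to `O_B`, and an inversion maps
each circle orthogonal to its circle of inversion onto itself.
-/

open AffineMap EuclideanGeometry Metric

section Affine

variable {k V P : Type*} [Field k] [AddCommGroup V] [Module k V] [AddTorsor V P]

theorem AffineIndependent.linearIndependent_vsub_vsub {A B C : P}
    (h : AffineIndependent k ![A, B, C]) : LinearIndependent k ![B -ᵥ A, C -ᵥ A] := by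
  rw [affineIndependent_iff_linearIndependent_vsub k _ (0 : Fin 3),
    ← linearIndependent_equiv (finSuccAboveEquiv (0 : Fin 3))] at h
  convert! h
  ext i; fin_cases i <;> rfl

theorem AffineIndependent.menelaus {A B C : P} (hABC : AffineIndependent k ![A, B, C])
    {α β t : k} (h : lineMap A C t ∈ line[k, lineMap B C β, lineMap A B α]) :
    (α + β - 1) * t = α * β := by
  obtain ⟨s, hs⟩ := mem_affineSpan_pair_iff_exists_lineMap_eq.1 h
  have hvec :
      ((1 - s) * (1 - β) + s * α) • (B -ᵥ A) + ((1 - s) * β - t) • (C -ᵥ A) = 0 := by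
    have h' := congrArg (· -ᵥ A) hs
    simp only [lineMap_vsub, vsub_self, lineMap_apply_module] at h'
    rw [← sub_eq_zero.2 h']
    module
  obtain ⟨hB, hC⟩ := LinearIndependent.pair_iff.1 hABC.linearIndependent_vsub_vsub _ _ hvec
  linear_combination -β * hB - (α + β - 1) * hC

end Affine

section Normed

variable {V P : Type*} [NormedAddCommGroup V] [NormedSpace ℝ V] [MetricSpace P]
  [NormedAddTorsor V P]

theorem affineIndependent_of_dist_lt_add_dist {A B C : P}
    (hB : dist A C < dist A B + dist B C) (hC : dist B A < dist B C + dist C A)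
    (hA : dist C B < dist C A + dist A B) : AffineIndependent ℝ ![A, B, C] := by
  rw [affineIndependent_iff_not_collinear_set]
  intro hcol
  rcases hcol.wbtw_or_wbtw_or_wbtw with h | h | h
  · exact hB.ne h.dist_add_dist.symm
  · exact hC.ne h.dist_add_dist.symm
  · exact hA.ne h.dist_add_dist.symm

theorem eq_lineMap_of_dist_eq_add_s9 [StrictConvexSpace ℝ V] {A B Z : P} {a b : ℝ}
    (hab : a + b ≠ 0) (hAB : dist A B = a + b) (hAZ : dist A Z = a) (hZB : dist Z B = b) :
    Z = lineMap A B (a / (a + b)) := by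
  apply eq_lineMap_of_dist_eq_mul_of_dist_eq_mul <;> rw [hAB] <;> field_simp
  · exact hAZ
  · rw [hZB]; ring

end Normed

section Euclidean

variable {V P : Type*} [NormedAddCommGroup V] [InnerProductSpace ℝ V] [MetricSpace P]
  [NormedAddTorsor V P]

theorem dist_sq_lineMap (p a b : P) (t : ℝ) :
    dist p (lineMap a b t) ^ 2 =
      (1 - t) * dist p a ^ 2 + t * dist p b ^ 2 - t * (1 - t) * dist a b ^ 2 := by
  have hab : b -ᵥ a = (b -ᵥ p) - (a -ᵥ p) := (vsub_sub_vsub_cancel_right b a p).symm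
  simp only [dist_comm p, dist_comm a b, dist_eq_norm_vsub V, AffineMap.lineMap_vsub,
    lineMap_apply_module, hab, ← real_inner_self_eq_norm_sq]
  simp only [inner_add_left, inner_add_right, inner_sub_left, inner_sub_right,
    real_inner_smul_left, real_inner_smul_right, real_inner_comm (a -ᵥ p)]
  ring

theorem inversion_mem_sphere_of_dist_sq_eq {c O x : P} {r R : ℝ}
    (h : dist c O ^ 2 = r ^ 2 + R ^ 2) (hx : x ∈ sphere O r) :
    inversion c R x ∈ sphere O r := by
  rcases eq_or_ne x c with rfl | hxc
  · rwa [inversion_self]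
  have hr : 0 ≤ r := hx.symm ▸ dist_nonneg
  have hk : (R / dist x c) ^ 2 * dist c x ^ 2 = R ^ 2 := by
    rw [dist_comm c x]; field_simp [dist_ne_zero.2 hxc]
  rw [Metric.mem_sphere, dist_comm, ← pow_left_inj₀ dist_nonneg hr two_ne_zero,
    inversion_eq_lineMap, dist_sq_lineMap, dist_comm O c, h, dist_comm O x, Metric.mem_sphere.1 hx]
  linear_combination ((R / dist x c) ^ 2 - 1) * hk

theorem image_inversion_sphere_of_dist_sq_eq {c O : P} {r R : ℝ} (hR : R ≠ 0)
    (h : dist c O ^ 2 = r ^ 2 + R ^ 2) : inversion c R '' sphere O r = sphere O r :=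
  (Set.image_subset_iff.2 fun _ ↦ inversion_mem_sphere_of_dist_sq_eq h).antisymm fun x hx ↦
    ⟨inversion c R x, inversion_mem_sphere_of_dist_sq_eq h hx, inversion_inversion c hR x⟩

theorem dist_lineMap_sq_eq_sq_add_dist_sq {A B C : P} {a b c t : ℝ} (hac : a + c ≠ 0)
    (hAB : dist A B = a + b) (hBC : dist B C = b + c) (hAC : dist A C = a + c)
    (ht : (a - c) * t = a) :
    dist (lineMap A C t) B ^ 2 =
      b ^ 2 + dist (lineMap A C t) (lineMap A C (a / (a + c))) ^ 2 := by
  rw [dist_comm, dist_sq_lineMap, dist_lineMap_lineMap, dist_comm B A, hAB, hBC, hAC,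
    Real.dist_eq, mul_pow, sq_abs]
  field_simp
  linear_combination (-2 * b) * ht

end Euclidean

/-- In a three-circle configuration, the inversion centered at
`B' = XZ ∩ AC` with radius `dist B' Y` maps circle `O_B` onto itself. -/
theorem inversion_fixes_OB
    (A B C X Y Z B' : EuclideanSpace ℝ (Fin 2)) (a b c : ℝ)
    (ha : 0 < a) (hb : 0 < b) (hc : 0 < c)
    (hAB : dist A B = a + b) (hBC : dist B C = b + c) (hAC : dist A C = a + c)
    (hZA : dist A Z = a) (hZB : dist B Z = b)
    (hXB : dist B X = b) (hXC : dist C X = c)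
    (hYA : dist A Y = a) (hYC : dist C Y = c)
    (hB'XZ : B' ∈ line[ℝ, X, Z]) (hB'AC : B' ∈ line[ℝ, A, C]) :
    EuclideanGeometry.inversion B' (dist B' Y) '' Metric.sphere B b =
      Metric.sphere B b := by
  have hZ : Z = lineMap A B (a / (a + b)) :=
    eq_lineMap_of_dist_eq_add_s9 (by positivity) hAB hZA (by rwa [dist_comm])
  have hX : X = lineMap B C (b / (b + c)) :=
    eq_lineMap_of_dist_eq_add_s9 (by positivity) hBC hXB (by rwa [dist_comm])
  have hY : Y = lineMap A C (a / (a + c)) :=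
    eq_lineMap_of_dist_eq_add_s9 (by positivity) hAC hYA (by rwa [dist_comm])
  have hABC : AffineIndependent ℝ ![A, B, C] := by
    apply affineIndependent_of_dist_lt_add_dist <;> simp only [dist_comm B A, dist_comm C B,
      dist_comm C A, hAB, hBC, hAC] <;> linarith
  subst hX hY hZ
  obtain ⟨t, rfl⟩ := mem_affineSpan_pair_iff_exists_lineMap_eq.1 hB'AC
  have ht : (a - c) * t = a := by
    have hmen := hABC.menelaus hB'XZ
    field_simp at hmen
    exact mul_left_cancel₀ hb.ne' (by linear_combination hmen)
  have hR : dist (lineMap A C t) (lineMap A C (a / (a + c))) ≠ 0 := by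
    rw [dist_lineMap_lineMap, hAC, Real.dist_eq]
    refine mul_ne_zero (abs_ne_zero.2 (sub_ne_zero.2 ?_)) (by positivity)
    rintro rfl
    field_simp at ht
    nlinarith
  exact image_inversion_sphere_of_dist_sq_eq hR
    (dist_lineMap_sq_eq_sq_add_dist_sq (by positivity) hAB hBC hAC ht)
end

section
/- In a three-circle configuration, suppose P is a point and r > 0 is such that the inversion with center P and radius r maps the circle centered at A with radius a onto the circle centered at C with radius c, and maps the circle centered at B with radius b onto itself. Then P lies on the line through A and C, P lies on the line through X and Z, and r = dist P Y (the inversion circle swapping O_A and O_C while fixing O_B is unique). -/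
/-!
Each pair of the circles meets in exactly one point, which is therefore determined by the pair.
An inversion swapping `O_A` and `O_C` and fixing `O_B` thus sends `Z` to `X` and fixes `Y`.
From `inversion Z = X` we get that `P`, `Z`, `X` are collinear, and `X ≠ Z` because three mutually
externally tangent circles have no common point. From `inversion Y = Y` we get `dist P Y = r`,
since `Y ≠ P`: a circle through the center of an inversion is mapped onto an unbounded set.
Finally the center of an inversion is collinear with the centers of a circle and its image.
-/

open EuclideanGeometry Metric AffineMap Set Bornology

section StrictConvex

variable {V P : Type*} [NormedAddCommGroup V] [NormedSpace ℝ V] [StrictConvexSpace ℝ V]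
  [MetricSpace P] [NormedAddTorsor V P]

theorem eq_lineMap_of_dist_eq_add_s11 {O₁ O₂ T : P} {ρ₁ ρ₂ : ℝ} (h : dist O₁ O₂ = ρ₁ + ρ₂)
    (h₁ : T ∈ sphere O₁ ρ₁) (h₂ : T ∈ sphere O₂ ρ₂) :
    T = lineMap O₁ O₂ (ρ₁ / (ρ₁ + ρ₂)) := by
  rw [Metric.mem_sphere'] at h₁
  rw [Metric.mem_sphere] at h₂
  rcases eq_or_ne (ρ₁ + ρ₂) 0 with h0 | h0
  · have : ρ₁ = 0 := by linarith [dist_nonneg (x := O₁) (y := T), dist_nonneg (x := T) (y := O₂)]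
    rw [this, zero_div, lineMap_apply_zero, eq_comm, ← dist_eq_zero, h₁, this]
  · apply eq_lineMap_of_dist_eq_mul_of_dist_eq_mul <;> rw [h] <;> field_simp <;> linarith

end StrictConvex

section Inversion

variable {V P : Type*} [NormedAddCommGroup V] [InnerProductSpace ℝ V] [MetricSpace P]
  [NormedAddTorsor V P]

theorem dist_center_eq_abs_of_inversion_eq_self {c x : P} {R : ℝ} (hx : x ≠ c)
    (h : inversion c R x = x) : dist x c = |R| := by
  have hd : 0 < dist x c := dist_pos.2 hx
  have := dist_inversion_center c x R
  rw [h, eq_div_iff hd.ne'] at this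
  rw [← abs_of_pos hd, ← sq_eq_sq_iff_abs_eq_abs, ← this, sq]

theorem collinear_inversion (c x : P) (R : ℝ) : Collinear ℝ {inversion c R x, c, x} :=
  collinear_insert_of_mem_affineSpan_pair (lineMap_mem_affineSpan_pair _ _ _)

end Inversion

section InnerProductSpace

variable {E : Type*} [NormedAddCommGroup E] [InnerProductSpace ℝ E]

open RealInnerProductSpace

theorem inner_sub_sub_eq_neg_mul_of_dist_eq_add {O₁ O₂ T : E} {ρ₁ ρ₂ : ℝ}
    (h : dist O₁ O₂ = ρ₁ + ρ₂) (h₁ : T ∈ sphere O₁ ρ₁) (h₂ : T ∈ sphere O₂ ρ₂) :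
    ⟪O₁ - T, O₂ - T⟫ = -(ρ₁ * ρ₂) := by
  rw [Metric.mem_sphere, dist_eq_norm'] at h₁ h₂
  rw [dist_eq_norm, ← sub_sub_sub_cancel_right O₁ O₂ T] at h
  have := norm_sub_sq_real (O₁ - T) (O₂ - T)
  rw [h, h₁, h₂] at this
  linarith

theorem sphere_inter_sphere_inter_sphere_eq_empty {A B C : E} {a b c : ℝ}
    (ha : 0 < a) (hb : 0 < b) (hc : 0 < c) (hAB : dist A B = a + b) (hBC : dist B C = b + c)
    (hAC : dist A C = a + c) : sphere A a ∩ sphere B b ∩ sphere C c = ∅ := by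
  refine eq_empty_of_forall_notMem fun T ⟨⟨hTA, hTB⟩, hTC⟩ ↦ ?_
  have hAB' := inner_sub_sub_eq_neg_mul_of_dist_eq_add hAB hTA hTB
  have hBC' := inner_sub_sub_eq_neg_mul_of_dist_eq_add hBC hTB hTC
  have hAC' := inner_sub_sub_eq_neg_mul_of_dist_eq_add hAC hTA hTC
  rw [Metric.mem_sphere, dist_eq_norm'] at hTA hTB hTC
  -- `‖b c (A - T) + a c (B - T) + a b (C - T)‖² = -3 a² b² c²`
  have := real_inner_self_nonneg (x := (b * c) • (A - T) + (a * c) • (B - T) + (a * b) • (C - T))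
  simp only [inner_add_left, inner_add_right, real_inner_smul_left, real_inner_smul_right,
    real_inner_comm (A - T) (B - T), real_inner_comm (A - T) (C - T),
    real_inner_comm (B - T) (C - T)] at this
  rw [real_inner_self_eq_norm_sq, real_inner_self_eq_norm_sq, real_inner_self_eq_norm_sq,
    hTA, hTB, hTC, hAB', hBC', hAC'] at this
  nlinarith [mul_pos (mul_pos ha hb) hc]

theorem not_isBounded_image_inversion_sphere (hE : 1 < Module.rank ℝ E) {c A : E} {R a : ℝ}
    (hR : R ≠ 0) (ha : 0 < a) (hc : c ∈ sphere A a) :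
    ¬ IsBounded (inversion c R '' sphere A a) := by
  intro hbdd
  obtain ⟨M, hM, hsub⟩ := hbdd.subset_ball_lt 0 c
  have hfar : ∀ x ∈ sphere A a, x ≠ c → R ^ 2 / M < dist x c := by
    intro x hx hxc
    have h := hsub (mem_image_of_mem _ hx)
    rw [mem_ball, dist_inversion_center, div_lt_iff₀ (dist_pos.2 hxc)] at h
    rwa [div_lt_iff₀ hM, mul_comm]
  have hε : 0 < R ^ 2 / M := by positivity
  -- `c` would be an isolated point of the connected sphere
  rcases (isPreconnected_sphere hE A a).subset_or_subset (isOpen_ball (x := c))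
    (isOpen_compl_iff.2 (isClosed_closedBall (x := c) (ε := R ^ 2 / M)))
    (disjoint_compl_right.mono_left ball_subset_closedBall)
    (fun x hx ↦ (eq_or_ne x c).imp (fun h ↦ h ▸ mem_ball_self hε)
      fun h ↦ (hfar x hx h).not_ge) with h | h
  · have hx : AffineIsometryEquiv.pointReflection ℝ A c ∈ sphere A a := by
      rwa [Metric.mem_sphere, AffineIsometryEquiv.dist_pointReflection_fixed]
    have hxc : AffineIsometryEquiv.pointReflection ℝ A c ≠ c :=
      AffineIsometryEquiv.pointReflection_fixed_iff.not.2 (ne_of_mem_sphere hc ha.ne')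
    exact (hfar _ hx hxc).not_gt (h hx)
  · exact h hc (mem_closedBall_self hε.le)

theorem sq_dist_mul_sq_dist_inversion {c x : E} (hx : x ≠ c) (R : ℝ) (y : E) :
    dist x c ^ 2 * dist (inversion c R x) y ^ 2 =
      R ^ 4 - 2 * R ^ 2 * ⟪x - c, y - c⟫ + dist y c ^ 2 * dist x c ^ 2 := by
  have hd : dist x c ≠ 0 := dist_ne_zero.2 hx
  have hsub : inversion c R x - y = (R / dist x c) ^ 2 • (x - c) - (y - c) := by
    rw [← sub_sub_sub_cancel_right _ y c, ← vsub_eq_sub _ c, inversion_vsub_center, vsub_eq_sub]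
  rw [dist_eq_norm (inversion c R x), hsub, norm_sub_sq_real, norm_smul, real_inner_smul_left,
    ← dist_eq_norm, ← dist_eq_norm, Real.norm_of_nonneg (sq_nonneg _)]
  field_simp

theorem smul_sub_eq_of_mapsTo_inversion_sphere {c A C : E} {R a ρ : ℝ} (ha : 0 < a)
    (hc : c ∉ sphere A a) (h : MapsTo (inversion c R) (sphere A a) (sphere C ρ)) :
    (dist C c ^ 2 - ρ ^ 2) • (A - c) = R ^ 2 • (C - c) := by
  set K := dist C c ^ 2 - ρ ^ 2
  have hpoly : ∀ x ∈ sphere A a, R ^ 4 - 2 * R ^ 2 * ⟪x - c, C - c⟫ + K * ‖x - c‖ ^ 2 = 0 := by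
    intro x hx
    have := sq_dist_mul_sq_dist_inversion (ne_of_mem_of_not_mem hx hc) R C
    rw [Metric.mem_sphere.1 (h hx)] at this
    rw [← dist_eq_norm]
    linear_combination -this
  -- evaluating `hpoly` at the antipodal points `A ± e` isolates the part linear in `e`
  have horth : ∀ e : E, ‖e‖ = a → ⟪e, K • (A - c) - R ^ 2 • (C - c)⟫ = 0 := by
    intro e he
    have h₁ := hpoly (A + e) (by rw [Metric.mem_sphere, dist_eq_norm, add_sub_cancel_left, he])
    have h₂ := hpoly (A - e) (by
      rw [Metric.mem_sphere, dist_eq_norm, sub_sub_cancel_left, norm_neg, he])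
    rw [add_sub_right_comm, norm_add_sq_real, inner_add_left] at h₁
    rw [sub_right_comm, norm_sub_sq_real, inner_sub_left] at h₂
    rw [inner_sub_right, real_inner_smul_right, real_inner_smul_right, real_inner_comm (A - c)]
    linear_combination (h₁ - h₂) / 4
  by_contra hne
  set w := K • (A - c) - R ^ 2 • (C - c)
  have hw : ‖w‖ ≠ 0 := norm_ne_zero_iff.2 (sub_ne_zero.2 hne)
  have := horth ((a / ‖w‖) • w) (by rw [norm_smul, Real.norm_of_nonneg (by positivity)]; field_simp)
  rw [real_inner_smul_left, real_inner_self_eq_norm_sq] at this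
  field_simp at this
  exact mul_ne_zero ha.ne' hw this

theorem collinear_of_mapsTo_inversion_sphere {c A C : E} {R a ρ : ℝ} (hR : R ≠ 0) (ha : 0 < a)
    (hc : c ∉ sphere A a) (h : MapsTo (inversion c R) (sphere A a) (sphere C ρ)) :
    Collinear ℝ {C, c, A} := by
  apply collinear_insert_of_mem_affineSpan_pair
  convert lineMap_mem_affineSpan_pair ((dist C c ^ 2 - ρ ^ 2) / R ^ 2) c A
  rw [lineMap_apply, vsub_eq_sub, vadd_eq_add, div_eq_inv_mul, mul_smul,
    smul_sub_eq_of_mapsTo_inversion_sphere ha hc h, inv_smul_smul₀ (pow_ne_zero 2 hR),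
    sub_add_cancel]

end InnerProductSpace

/-- Uniqueness of the inversion circle swapping `O_A` and `O_C` while fixing
`O_B`: its center lies on line `AC` and on line `XZ`, and its radius is the
distance from the center to `Y`. -/
theorem inversion_circle_unique
    (A B C X Y Z P : EuclideanSpace ℝ (Fin 2)) (a b c r : ℝ)
    (ha : 0 < a) (hb : 0 < b) (hc : 0 < c) (hr : 0 < r)
    (hAB : dist A B = a + b) (hBC : dist B C = b + c) (hAC : dist A C = a + c)
    (hZA : dist A Z = a) (hZB : dist B Z = b)
    (hXB : dist B X = b) (hXC : dist C X = c)
    (hYA : dist A Y = a) (hYC : dist C Y = c)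
    (hswap : EuclideanGeometry.inversion P r '' Metric.sphere A a =
      Metric.sphere C c)
    (hfix : EuclideanGeometry.inversion P r '' Metric.sphere B b =
      Metric.sphere B b) :
    P ∈ line[ℝ, A, C] ∧ P ∈ line[ℝ, X, Z] ∧ r = dist P Y := by
  have hr0 : r ≠ 0 := hr.ne'
  rw [← Metric.mem_sphere'] at hZA hZB hXB hXC hYA hYC
  have hAC_maps : MapsTo (inversion P r) (sphere A a) (sphere C c) :=
    (mapsTo_image _ _).mono_right hswap.subset
  have hB_maps : MapsTo (inversion P r) (sphere B b) (sphere B b) :=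
    (mapsTo_image _ _).mono_right hfix.subset
  have hCA_maps : MapsTo (inversion P r) (sphere C c) (sphere A a) := by
    rw [← hswap, image_eq_preimage_of_inverse (inversion_involutive P hr0)
      (inversion_involutive P hr0)]
    exact mapsTo_preimage _ _
  have hPA : P ∉ sphere A a := fun hP ↦ not_isBounded_image_inversion_sphere
    (by simp [← Module.finrank_eq_rank]) hr0 ha hP (hswap ▸ isBounded_sphere)
  have hZX : inversion P r Z = X := by
    rw [eq_lineMap_of_dist_eq_add_s11 hBC (hB_maps hZB) (hAC_maps hZA),
      eq_lineMap_of_dist_eq_add_s11 hBC hXB hXC]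
  have hYY : inversion P r Y = Y := by
    rw [eq_lineMap_of_dist_eq_add_s11 hAC (hCA_maps hYC) (hAC_maps hYA),
      eq_lineMap_of_dist_eq_add_s11 hAC hYA hYC]
  have hXZ : X ≠ Z := fun h ↦
    (sphere_inter_sphere_inter_sphere_eq_empty ha hb hc hAB hBC hAC).subset ⟨⟨hZA, hZB⟩, h ▸ hXC⟩
  refine ⟨?_, ?_, ?_⟩
  · exact (collinear_of_mapsTo_inversion_sphere hr0 ha hPA hAC_maps).mem_affineSpan_of_mem_of_ne
      (by simp) (by simp) (by simp) (dist_ne_zero.1 (by rw [hAC]; positivity))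
  · exact (hZX ▸ collinear_inversion P Z r).mem_affineSpan_of_mem_of_ne
      (by simp) (by simp) (by simp) hXZ
  · rw [dist_comm, dist_center_eq_abs_of_inversion_eq_self (ne_of_mem_of_not_mem
      hYA hPA) hYY, abs_of_pos hr]
end

section
/- In a three-circle configuration, the line through X and Z is parallel to the line through A and C if and only if a = c (the construction point B' = XZ ∩ AC fails to exist exactly when the circles O_A and O_C have equal radii). -/
/-!
The tangency points divide the sides of the triangle of centres:
`Z = A + a/(a+b) • (B - A)` and `X = B + b/(b+c) • (C - B)`. Hence
`X - Z = b(c-a)/((a+b)(b+c)) • (B - A) + b/(b+c) • (C - A)`. The centres are not collinear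
(the side lengths satisfy strict triangle inequalities), so `B - A` and `C - A` are independent
and `XZ ∥ AC` exactly when the coefficient of `B - A` vanishes, i.e. when `a = c`.
-/

section Affine

variable {k V P : Type*} [Field k] [AddCommGroup V] [Module k V] [AddTorsor V P]

theorem lineMap_vsub_lineMap_eq (A B C : P) (s t : k) :
    AffineMap.lineMap B C s -ᵥ AffineMap.lineMap A B t =
      (1 - t - s) • (B -ᵥ A) + s • (C -ᵥ A) := by
  simp only [AffineMap.lineMap_apply, vadd_vsub_vadd_comm]
  rw [← vsub_sub_vsub_cancel_right C B A]
  module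

theorem smul_vsub_add_smul_vsub_mem_span_iff {A B C : P} (h : ¬Collinear k {A, B, C})
    {p q : k} : p • (B -ᵥ A) + q • (C -ᵥ A) ∈ k ∙ (C -ᵥ A) ↔ p = 0 := by
  refine ⟨fun hmem => ?_, fun hp => ?_⟩
  · by_contra hp
    have hB : B -ᵥ A ∈ k ∙ (C -ᵥ A) := by
      have hqCA : q • (C -ᵥ A) ∈ k ∙ (C -ᵥ A) :=
        Submodule.smul_mem _ q (Submodule.mem_span_singleton_self _)
      simpa [hp] using Submodule.smul_mem _ p⁻¹ (Submodule.sub_mem _ hmem hqCA)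
    apply h
    rw [Set.insert_comm]
    apply collinear_insert_of_mem_affineSpan_pair
    rwa [← AffineSubspace.vsub_right_mem_direction_iff_mem (left_mem_affineSpan_pair k A C),
      direction_affineSpan, vectorSpan_pair_rev]
  · rw [hp, zero_smul, zero_add]
    exact Submodule.smul_mem _ q (Submodule.mem_span_singleton_self _)

theorem affineSpan_pair_parallel_iff_of_not_collinear {A B C X Z : P}
    (h : ¬Collinear k {A, B, C}) {p q : k} (hXZ : X -ᵥ Z = p • (B -ᵥ A) + q • (C -ᵥ A)) :
    AffineSubspace.Parallel line[k, X, Z] line[k, A, C] ↔ p = 0 ∧ q ≠ 0 := by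
  rw [AffineSubspace.affineSpan_pair_parallel_iff_vectorSpan_eq, vectorSpan_pair,
    vectorSpan_pair_rev, hXZ]
  have hCA : C -ᵥ A ≠ 0 := by
    rw [vsub_ne_zero]
    rintro rfl
    exact h ((collinear_pair k C B).subset (by grind))
  refine ⟨fun hspan => ?_, fun ⟨hp, hq⟩ => ?_⟩
  · have hp := (smul_vsub_add_smul_vsub_mem_span_iff h).1
      (hspan ▸ Submodule.mem_span_singleton_self _)
    refine ⟨hp, fun hq => hCA ?_⟩
    rw [hp, hq, zero_smul, zero_smul, zero_add, Submodule.span_zero_singleton, eq_comm,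
      Submodule.span_singleton_eq_bot] at hspan
    exact hspan
  · rw [hp, zero_smul, zero_add]
    exact Submodule.span_singleton_smul_eq (isUnit_iff_ne_zero.2 hq) _

end Affine

section Normed

variable {V P : Type*} [NormedAddCommGroup V] [NormedSpace ℝ V] [MetricSpace P]
  [NormedAddTorsor V P]

theorem not_collinear_of_dist_lt_dist_add_dist {A B C : P}
    (hB : dist A C < dist A B + dist B C) (hC : dist B A < dist B C + dist C A)
    (hA : dist C B < dist C A + dist A B) : ¬Collinear ℝ {A, B, C} := by
  intro hcol
  rcases hcol.wbtw_or_wbtw_or_wbtw with h | h | h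
  · exact hB.ne' h.dist_add_dist
  · exact hC.ne' h.dist_add_dist
  · exact hA.ne' h.dist_add_dist

theorem eq_lineMap_of_dist_eq_of_dist_eq [StrictConvexSpace ℝ V] {A B Z : P} {a b : ℝ}
    (hab : 0 < a + b) (hAB : dist A B = a + b) (hAZ : dist A Z = a) (hZB : dist Z B = b) :
    Z = AffineMap.lineMap A B (a / (a + b)) := by
  apply eq_lineMap_of_dist_eq_mul_of_dist_eq_mul
  · rw [hAZ, hAB, div_mul_cancel₀ _ hab.ne']
  · rw [hZB, hAB, one_sub_div hab.ne', add_sub_cancel_left, div_mul_cancel₀ _ hab.ne']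

end Normed

theorem XZ_parallel_AC_iff_radii_equal_general
    (A B C X Z : EuclideanSpace ℝ (Fin 2)) (a b c : ℝ)
    (ha : 0 < a) (hb : 0 < b) (hc : 0 < c)
    (hAB : dist A B = a + b) (hBC : dist B C = b + c) (hAC : dist A C = a + c)
    (hZA : dist A Z = a) (hZB : dist B Z = b)
    (hXB : dist B X = b) (hXC : dist C X = c) :
    AffineSubspace.Parallel line[ℝ, X, Z] line[ℝ, A, C] ↔ a = c := by
  have hZ : Z = AffineMap.lineMap A B (a / (a + b)) :=
    eq_lineMap_of_dist_eq_of_dist_eq (by positivity) hAB hZA (by rwa [dist_comm])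
  have hX : X = AffineMap.lineMap B C (b / (b + c)) :=
    eq_lineMap_of_dist_eq_of_dist_eq (by positivity) hBC hXB (by rwa [dist_comm])
  have hABC : ¬Collinear ℝ {A, B, C} := by
    apply not_collinear_of_dist_lt_dist_add_dist <;>
      simp only [dist_comm B A, dist_comm C B, dist_comm C A, hAB, hBC, hAC] <;> linarith
  rw [affineSpan_pair_parallel_iff_of_not_collinear hABC
    (by rw [hX, hZ]; exact lineMap_vsub_lineMap_eq A B C _ _)]
  have hcoeff : 1 - a / (a + b) - b / (b + c) = b * (c - a) / ((a + b) * (b + c)) := by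
    field_simp
    ring
  rw [hcoeff, div_eq_zero_iff, mul_eq_zero, sub_eq_zero]
  constructor
  · rintro ⟨(hb0 | hca) | hden, -⟩
    · linarith
    · exact hca.symm
    · exact absurd hden (by positivity)
  · rintro rfl
    exact ⟨Or.inl (Or.inr rfl), by positivity⟩

/-- In a three-circle configuration, line `XZ` is parallel to line `AC` if
and only if `a = c`. -/
theorem XZ_parallel_AC_iff_radii_equal
    (A B C X Y Z : EuclideanSpace ℝ (Fin 2)) (a b c : ℝ)
    (ha : 0 < a) (hb : 0 < b) (hc : 0 < c)
    (hAB : dist A B = a + b) (hBC : dist B C = b + c) (hAC : dist A C = a + c)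
    (hZA : dist A Z = a) (hZB : dist B Z = b)
    (hXB : dist B X = b) (hXC : dist C X = c)
    (hYA : dist A Y = a) (hYC : dist C Y = c) :
    AffineSubspace.Parallel line[ℝ, X, Z] line[ℝ, A, C] ↔ a = c :=
  XZ_parallel_AC_iff_radii_equal_general A B C X Z a b c ha hb hc hAB hBC hAC hZA hZB hXB hXC
end
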